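/- arXiv:1802.04524 — 2 statements merged into one kernel-verified Lean document; each statement's English description precedes it below -/
import Mathlib

section
/- Let S = (N, D) be a finite linear space, i.e., N is a finite set of points and D is a collection of subsets of N (called lines) such that every line contains at least two points and any two distinct points of N lie on exactly one common line. Let v = |N| be the number of points and b = |D| the number of lines. If b > 1, then b ≥ v. -/
/-!
Points of `N` and lines of `D` form a nondegenerate configuration in which any two points are
joined by a line, so Mathlib's `Configuration.HasLines.card_le` applies; its proof is the paper's
double count, resting on `|ℓ| ≤ #{lines through p}` whenever `p ∉ ℓ`. Nondegeneracy needs the two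
lines `l₁ ≠ l₂`: a line containing every point would contain two points of another line, and a
point `p` on every line would lie on the line through a point of `l₁ \ l₂` and a point of
`l₂ \ l₁`, which would then meet `l₁` in two points.
-/

namespace Finset

variable {α : Type*}

structure IsLinearSpace (N : Finset α) (D : Finset (Finset α)) : Prop where
  subset_of_mem : ∀ ℓ ∈ D, ℓ ⊆ N
  two_le_card : ∀ ℓ ∈ D, 2 ≤ ℓ.card
  existsUnique_line : ∀ p ∈ N, ∀ q ∈ N, p ≠ q → ∃! ℓ, ℓ ∈ D ∧ p ∈ ℓ ∧ q ∈ ℓ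

namespace IsLinearSpace

variable {N : Finset α} {D : Finset (Finset α)}

theorem eq_of_mem_of_mem (h : IsLinearSpace N D) {p q : α} {m m' : Finset α} (hpq : p ≠ q)
    (hm : m ∈ D) (hm' : m' ∈ D) (hpm : p ∈ m) (hqm : q ∈ m) (hpm' : p ∈ m') (hqm' : q ∈ m') :
    m = m' :=
  (h.existsUnique_line p (h.subset_of_mem m hm hpm) q (h.subset_of_mem m hm hqm) hpq).unique
    ⟨hm, hpm, hqm⟩ ⟨hm', hpm', hqm'⟩

theorem exists_mem_notMem_of_ne (h : IsLinearSpace N D) {m m' : Finset α} (hm : m ∈ D)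
    (hm' : m' ∈ D) (hne : m ≠ m') : ∃ x ∈ m', x ∉ m := by
  obtain ⟨p, hp, q, hq, hpq⟩ := one_lt_card.mp (h.two_le_card m' hm')
  by_contra! hall
  exact hne (h.eq_of_mem_of_mem hpq hm hm' (hall p hp) (hall q hq) hp hq)

theorem exists_notMem_of_one_lt_card (h : IsLinearSpace N D) (hD : 1 < D.card) {m : Finset α}
    (hm : m ∈ D) : ∃ x ∈ N, x ∉ m := by
  obtain ⟨m', hm', hne⟩ := exists_mem_ne hD m
  obtain ⟨x, hx, hxm⟩ := h.exists_mem_notMem_of_ne hm hm' hne.symm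
  exact ⟨x, h.subset_of_mem m' hm' hx, hxm⟩

theorem exists_line_notMem_of_one_lt_card (h : IsLinearSpace N D) (hD : 1 < D.card) (p : α) :
    ∃ m ∈ D, p ∉ m := by
  obtain ⟨l₁, hl₁, l₂, hl₂, hne⟩ := one_lt_card.mp hD
  by_contra! hall
  obtain ⟨r, hr₁, hr₂⟩ := h.exists_mem_notMem_of_ne hl₂ hl₁ hne.symm
  obtain ⟨t, ht₂, ht₁⟩ := h.exists_mem_notMem_of_ne hl₁ hl₂ hne
  have hrt : r ≠ t := fun hrt => ht₁ (hrt ▸ hr₁)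
  obtain ⟨m, ⟨hm, hrm, htm⟩, -⟩ :=
    h.existsUnique_line r (h.subset_of_mem l₁ hl₁ hr₁) t (h.subset_of_mem l₂ hl₂ ht₂) hrt
  have hpr : p ≠ r := fun hpr => hr₂ (hpr ▸ hall l₂ hl₂)
  have hml₁ : m = l₁ := h.eq_of_mem_of_mem hpr hm hl₁ (hall m hm) hrm (hall l₁ hl₁) hr₁
  exact ht₁ (hml₁ ▸ htm)

/-- Not a global instance: `N` would be an undetermined out-param. -/
abbrev incidence (N : Finset α) (D : Finset (Finset α)) : Membership N D :=
  ⟨fun ℓ p => p.1 ∈ ℓ.1⟩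

noncomputable abbrev hasLines (h : IsLinearSpace N D) (hD : 1 < D.card) :
    @Configuration.HasLines N D (incidence N D) :=
  letI := incidence N D
  { exists_point := fun ⟨_, hm⟩ =>
      let ⟨x, hx, hxm⟩ := h.exists_notMem_of_one_lt_card hD hm
      ⟨⟨x, hx⟩, hxm⟩
    exists_line := fun ⟨p, _⟩ =>
      let ⟨m, hm, hpm⟩ := h.exists_line_notMem_of_one_lt_card hD p
      ⟨⟨m, hm⟩, hpm⟩
    eq_or_eq := fun {p q m m'} hpm hqm hpm' hqm' =>
      (eq_or_ne p q).imp id fun hpq =>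
        Subtype.ext (h.eq_of_mem_of_mem (Subtype.coe_ne_coe.mpr hpq) m.2 m'.2 hpm hqm hpm' hqm')
    mkLine := fun {p q} hpq =>
      ⟨_, (h.existsUnique_line p p.2 q q.2 (Subtype.coe_ne_coe.mpr hpq)).exists.choose_spec.1⟩
    mkLine_ax := fun {p q} hpq =>
      (h.existsUnique_line p p.2 q q.2 (Subtype.coe_ne_coe.mpr hpq)).exists.choose_spec.2 }

theorem card_le_card (h : IsLinearSpace N D) (hD : 1 < D.card) : N.card ≤ D.card := by
  let := incidence N D
  let := h.hasLines hD
  simpa only [Fintype.card_coe] using Configuration.HasLines.card_le N D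

end IsLinearSpace

end Finset

theorem deBruijn_erdos_inequality_general {α : Type*}
    (N : Finset α) (D : Finset (Finset α))
    (hsub : ∀ ℓ ∈ D, ℓ ⊆ N)
    (hcard : ∀ ℓ ∈ D, 2 ≤ ℓ.card)
    (hunique : ∀ p ∈ N, ∀ q ∈ N, p ≠ q → ∃! ℓ, ℓ ∈ D ∧ p ∈ ℓ ∧ q ∈ ℓ)
    (hb : 1 < D.card) :
    N.card ≤ D.card :=
  Finset.IsLinearSpace.card_le_card ⟨hsub, hcard, hunique⟩ hb

/-- **De Bruijn–Erdős inequality.** In a finite linear space `(N, D)` — every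
line is a subset of `N` with at least two points, and any two distinct points
lie on exactly one common line — if the number of lines `b = |D|` exceeds `1`,
then `b ≥ v = |N|`. -/
theorem deBruijn_erdos_inequality {α : Type*} [DecidableEq α]
    (N : Finset α) (D : Finset (Finset α))
    (hsub : ∀ ℓ ∈ D, ℓ ⊆ N)
    (hcard : ∀ ℓ ∈ D, 2 ≤ ℓ.card)
    (hunique : ∀ p ∈ N, ∀ q ∈ N, p ≠ q → ∃! ℓ, ℓ ∈ D ∧ p ∈ ℓ ∧ q ∈ ℓ)
    (hb : 1 < D.card) :
    N.card ≤ D.card :=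
  deBruijn_erdos_inequality_general N D hsub hcard hunique hb
end

section
/- Let S = (N, D) be a finite linear space, i.e., N is a finite set of points and D is a collection of subsets of N (called lines) such that every line contains at least two points and any two distinct points of N lie on exactly one common line. Let v = |N| and b = |D|, and suppose b > 1. If b = v, then any two distinct lines of D have a point in common. -/
open Finset

/-- Auxiliary: for a point `p` off a line `ℓ`, there is an injection from points
of `ℓ` to lines through `p`, sending `q` to the line through `p` and `q`. -/
lemma deBruijn_erdos_aux {α : Type*} [DecidableEq α]
    (N : Finset α) (D : Finset (Finset α))
    (hsub : ∀ ℓ ∈ D, ℓ ⊆ N)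
    (hunique : ∀ p ∈ N, ∀ q ∈ N, p ≠ q → ∃! ℓ, ℓ ∈ D ∧ p ∈ ℓ ∧ q ∈ ℓ)
    {p : α} (hp : p ∈ N) {ℓ : Finset α} (hℓ : ℓ ∈ D) (hpl : p ∉ ℓ) :
    ∃ f : α → Finset α, Set.InjOn f ℓ ∧
      ∀ q ∈ ℓ, f q ∈ D ∧ p ∈ f q ∧ q ∈ f q := by
  classical
  have hex : ∀ q ∈ ℓ, ∃ m, m ∈ D ∧ p ∈ m ∧ q ∈ m := by
    intro q hq
    have hqN : q ∈ N := hsub ℓ hℓ hq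
    have hpq : p ≠ q := fun h => hpl (h ▸ hq)
    exact (hunique p hp q hqN hpq).exists
  refine ⟨fun q => if h : ∃ m, m ∈ D ∧ p ∈ m ∧ q ∈ m then h.choose else ∅, ?_, ?_⟩
  · intro q hq q' hq' hfe
    by_contra hne
    have h1 := hex q hq
    have h2 := hex q' hq'
    simp only [dif_pos h1, dif_pos h2] at hfe
    have s1 := h1.choose_spec
    have s2 := h2.choose_spec
    -- the common line h1.choose contains q and q', so it equals ℓ by uniqueness
    have hu := hunique q (hsub ℓ hℓ hq) q' (hsub ℓ hℓ hq') hne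
    have e1 : h1.choose = ℓ := hu.unique ⟨s1.1, s1.2.2, hfe ▸ s2.2.2⟩ ⟨hℓ, hq, hq'⟩
    exact hpl (e1 ▸ s1.2.1)
  · intro q hq
    have h1 := hex q hq
    simp only [dif_pos h1]
    exact h1.choose_spec

/-- In a finite linear space `(N, D)` with `b = |D| > 1` lines, if the number
of lines equals the number of points (`b = v`), then any two distinct lines
have a point in common. -/
theorem deBruijn_erdos_lines_meet {α : Type*} [DecidableEq α]
    (N : Finset α) (D : Finset (Finset α))
    (hsub : ∀ ℓ ∈ D, ℓ ⊆ N)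
    (hcard : ∀ ℓ ∈ D, 2 ≤ ℓ.card)
    (hunique : ∀ p ∈ N, ∀ q ∈ N, p ≠ q → ∃! ℓ, ℓ ∈ D ∧ p ∈ ℓ ∧ q ∈ ℓ)
    (hb : 1 < D.card) (heq : D.card = N.card) :
    ∀ ℓ₁ ∈ D, ∀ ℓ₂ ∈ D, ℓ₁ ≠ ℓ₂ → (ℓ₁ ∩ ℓ₂).Nonempty := by
  classical
  by_contra hcon
  push_neg at hcon
  obtain ⟨ℓ₁, hℓ₁, ℓ₂, hℓ₂, hne12, hdisj⟩ := hcon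
  have hdisj' : ∀ x, x ∈ ℓ₁ → x ∉ ℓ₂ := by
    intro x h1 h2
    have : x ∈ ℓ₁ ∩ ℓ₂ := mem_inter.mpr ⟨h1, h2⟩
    simp [hdisj] at this
  set v := N.card with hv
  set b := D.card with hbdef
  set r : α → ℕ := fun p => (D.filter (fun m => p ∈ m)).card with hr
  -- basic counting: p ∉ ℓ implies ℓ.card ≤ r p
  have key : ∀ p ∈ N, ∀ ℓ ∈ D, p ∉ ℓ → ℓ.card ≤ r p := by
    intro p hp ℓ hℓ hpl
    obtain ⟨f, hinj, hf⟩ := deBruijn_erdos_aux N D hsub hunique hp hℓ hpl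
    calc ℓ.card = (ℓ.image f).card := (Finset.card_image_of_injOn hinj).symm
      _ ≤ r p := by
          apply Finset.card_le_card
          intro m hm
          obtain ⟨q, hq, rfl⟩ := Finset.mem_image.mp hm
          exact Finset.mem_filter.mpr ⟨(hf q hq).1, (hf q hq).2.1⟩
  -- strict version: if moreover p lies on a line disjoint from ℓ
  have key' : ∀ p ∈ N, ∀ ℓ ∈ D, p ∉ ℓ → ∀ ℓ' ∈ D, p ∈ ℓ' →
      (∀ x, x ∈ ℓ → x ∉ ℓ') → ℓ.card + 1 ≤ r p := by
    intro p hp ℓ hℓ hpl ℓ' hℓ' hpl' hdis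
    obtain ⟨f, hinj, hf⟩ := deBruijn_erdos_aux N D hsub hunique hp hℓ hpl
    have himg : ℓ.image f ⊆ (D.filter (fun m => p ∈ m)).erase ℓ' := by
      intro m hm
      obtain ⟨q, hq, rfl⟩ := Finset.mem_image.mp hm
      refine Finset.mem_erase.mpr ⟨?_, Finset.mem_filter.mpr ⟨(hf q hq).1, (hf q hq).2.1⟩⟩
      intro hEq
      exact hdis q hq (hEq ▸ (hf q hq).2.2)
    have h1 : ℓ.card ≤ ((D.filter (fun m => p ∈ m)).erase ℓ').card := by
      calc ℓ.card = (ℓ.image f).card := (Finset.card_image_of_injOn hinj).symm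
        _ ≤ _ := Finset.card_le_card himg
    have h2 : ℓ' ∈ D.filter (fun m => p ∈ m) := Finset.mem_filter.mpr ⟨hℓ', hpl'⟩
    have h3 := Finset.card_erase_add_one h2
    have hrp : r p = (D.filter (fun m => p ∈ m)).card := rfl
    omega
  -- every line misses some point: ℓ.card < v
  have hkv : ∀ ℓ ∈ D, ℓ.card < v := by
    intro ℓ hℓ
    obtain ⟨ℓ', hℓ', hℓ'ne⟩ : ∃ ℓ' ∈ D, ℓ' ≠ ℓ := by
      by_contra h
      push_neg at h
      have : D ⊆ {ℓ} := fun m hm => Finset.mem_singleton.mpr (h m hm)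
      have := Finset.card_le_card this
      simp at this
      omega
    have hssub : ℓ ⊂ N := by
      refine Finset.ssubset_iff_of_subset (hsub ℓ hℓ) |>.mpr ?_
      by_contra h
      push_neg at h
      -- then N ⊆ ℓ, so ℓ' ⊆ ℓ; two points of ℓ' give ℓ' = ℓ
      obtain ⟨x, hx, y, hy, hxy⟩ := Finset.one_lt_card.mp (lt_of_lt_of_le one_lt_two (hcard ℓ' hℓ'))
      have hxN := hsub ℓ' hℓ' hx
      have hyN := hsub ℓ' hℓ' hy
      have hu := hunique x hxN y hyN hxy
      have e : ℓ' = ℓ := hu.unique ⟨hℓ', hx, hy⟩ ⟨hℓ, h x hxN, h y hyN⟩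
      exact hℓ'ne e
    exact Finset.card_lt_card hssub
  -- every point misses some line: r p < b
  have hrb : ∀ p ∈ N, r p < b := by
    intro p hp
    have : ∃ ℓ ∈ D, p ∉ ℓ := by
      by_cases h : p ∈ ℓ₁
      · exact ⟨ℓ₂, hℓ₂, hdisj' p h⟩
      · exact ⟨ℓ₁, hℓ₁, h⟩
    obtain ⟨ℓ, hℓ, hpl⟩ := this
    have hssub : D.filter (fun m => p ∈ m) ⊂ D := by
      refine Finset.ssubset_iff_of_subset (Finset.filter_subset _ _) |>.mpr ?_
      exact ⟨ℓ, hℓ, fun h => hpl (Finset.mem_filter.mp h).2⟩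
    exact Finset.card_lt_card hssub
  -- the two sums over non-incident pairs
  set F : α × Finset α → ℚ :=
    fun x => if x.1 ∈ x.2 then 0 else 1 / ((b : ℚ) - r x.1) with hF
  set G : α × Finset α → ℚ :=
    fun x => if x.1 ∈ x.2 then 0 else 1 / ((v : ℚ) - x.2.card) with hG
  have hSF : ∑ x ∈ N ×ˢ D, F x = v := by
    rw [Finset.sum_product]
    have : ∀ p ∈ N, ∑ ℓ ∈ D, F (p, ℓ) = 1 := by
      intro p hp
      have hcnt : (D.filter (fun ℓ => p ∉ ℓ)).card = b - r p := by
        have := Finset.card_filter_add_card_filter_not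
          (s := D) (p := fun ℓ => p ∈ ℓ)
        have hrp : r p = (D.filter (fun m => p ∈ m)).card := rfl
        have hbd : b = D.card := rfl
        omega
      calc ∑ ℓ ∈ D, F (p, ℓ)
          = ∑ ℓ ∈ D.filter (fun ℓ => p ∉ ℓ), 1 / ((b : ℚ) - r p) := by
            rw [Finset.sum_filter]
            apply Finset.sum_congr rfl
            intro ℓ hℓ
            by_cases h : p ∈ ℓ <;> simp [hF, h]
        _ = ((b - r p : ℕ) : ℚ) * (1 / ((b : ℚ) - r p)) := by
            rw [Finset.sum_const, hcnt]; simp [mul_comm]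
        _ = 1 := by
            have h1 : r p < b := hrb p hp
            have h2 : ((b - r p : ℕ) : ℚ) = (b : ℚ) - r p := by
              push_cast [Nat.cast_sub h1.le]; ring
            have h3 : (b : ℚ) - r p ≠ 0 := by
              have : (r p : ℚ) < b := by exact_mod_cast h1
              intro h; linarith
            rw [h2, mul_one_div, div_self h3]
    rw [Finset.sum_congr rfl this]
    simp [hv]
  have hSG : ∑ x ∈ N ×ˢ D, G x = b := by
    rw [Finset.sum_product_right]
    have : ∀ ℓ ∈ D, ∑ p ∈ N, G (p, ℓ) = 1 := by
      intro ℓ hℓ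
      have hfe : N.filter (fun p => p ∈ ℓ) = ℓ := by
        ext x
        simp only [Finset.mem_filter]
        exact ⟨fun h => h.2, fun h => ⟨hsub ℓ hℓ h, h⟩⟩
      have hcnt : (N.filter (fun p => p ∉ ℓ)).card = v - ℓ.card := by
        have := Finset.card_filter_add_card_filter_not
          (s := N) (p := fun p => p ∈ ℓ)
        rw [hfe] at this
        omega
      calc ∑ p ∈ N, G (p, ℓ)
          = ∑ p ∈ N.filter (fun p => p ∉ ℓ), 1 / ((v : ℚ) - ℓ.card) := by
            rw [Finset.sum_filter]
            apply Finset.sum_congr rfl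
            intro p hp
            by_cases h : p ∈ ℓ <;> simp [hG, h]
        _ = ((v - ℓ.card : ℕ) : ℚ) * (1 / ((v : ℚ) - ℓ.card)) := by
            rw [Finset.sum_const, hcnt]; simp [mul_comm]
        _ = 1 := by
            have h1 : ℓ.card < v := hkv ℓ hℓ
            have h2 : ((v - ℓ.card : ℕ) : ℚ) = (v : ℚ) - ℓ.card := by
              push_cast [Nat.cast_sub h1.le]; ring
            have h3 : (v : ℚ) - ℓ.card ≠ 0 := by
              have : (ℓ.card : ℚ) < v := by exact_mod_cast h1
              intro h; linarith
            rw [h2, mul_one_div, div_self h3]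
    rw [Finset.sum_congr rfl this]
    simp [hbdef]
  -- pointwise G ≤ F, strictly at (p₀, ℓ₂)
  obtain ⟨p₀, hp₀⟩ : ℓ₁.Nonempty := Finset.card_pos.mp (by have := hcard ℓ₁ hℓ₁; omega)
  have hp₀N : p₀ ∈ N := hsub ℓ₁ hℓ₁ hp₀
  have hp₀ℓ₂ : p₀ ∉ ℓ₂ := hdisj' p₀ hp₀
  have hlt : ∑ x ∈ N ×ˢ D, G x < ∑ x ∈ N ×ˢ D, F x := by
    apply Finset.sum_lt_sum
    · rintro ⟨p, ℓ⟩ hx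
      obtain ⟨hpN, hℓD⟩ := Finset.mem_product.mp hx
      by_cases h : p ∈ ℓ
      · simp [hF, hG, h]
      · simp only [hF, hG, if_neg h]
        have h1 : ℓ.card ≤ r p := key p hpN ℓ hℓD h
        have h2 : r p < b := hrb p hpN
        have hpos : (0 : ℚ) < (b : ℚ) - r p := by
          have : (r p : ℚ) < b := by exact_mod_cast h2
          linarith
        have hle : (b : ℚ) - r p ≤ (v : ℚ) - ℓ.card := by
          have : (ℓ.card : ℚ) ≤ r p := by exact_mod_cast h1
          have : (b : ℚ) = v := by exact_mod_cast heq
          linarith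
        exact one_div_le_one_div_of_le hpos hle
    · refine ⟨(p₀, ℓ₂), Finset.mem_product.mpr ⟨hp₀N, hℓ₂⟩, ?_⟩
      simp only [hF, hG, if_neg hp₀ℓ₂]
      have h1 : ℓ₂.card + 1 ≤ r p₀ :=
        key' p₀ hp₀N ℓ₂ hℓ₂ hp₀ℓ₂ ℓ₁ hℓ₁ hp₀ (fun x hx2 hx1 => hdisj' x hx1 hx2)
      have h2 : r p₀ < b := hrb p₀ hp₀N
      have hpos : (0 : ℚ) < (b : ℚ) - r p₀ := by
        have : (r p₀ : ℚ) < b := by exact_mod_cast h2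
        linarith
      have hlt' : (b : ℚ) - r p₀ < (v : ℚ) - ℓ₂.card := by
        have : (ℓ₂.card : ℚ) + 1 ≤ r p₀ := by exact_mod_cast h1
        have : (b : ℚ) = v := by exact_mod_cast heq
        linarith
      exact one_div_lt_one_div_of_lt hpos hlt'
  rw [hSG, hSF] at hlt
  have : b < v := by exact_mod_cast hlt
  omega
end
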